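/- arXiv:1701.08011 — 3 statements merged into one kernel-verified Lean document; each statement's English description precedes it below -/
import Mathlib

section
/- Suppose A is an n×n complex matrix, S, Π are differentiable matrix-valued functions on an interval with Π' = AΠq_1 + Πq_0 and S' = Π q_1 j Π*, where q_1 = [[0,0],[I_h,0]], q_0(x) = -[[0,I_h],[u(x),0]] with u(x)=u(x)*, and j = [[0,I_h],[-I_h,0]]. If the identity A S(0) - S(0) A* = Π(0) j Π(0)* holds at x = 0, then A S(x) - S(x) A* = Π(x) j Π(x)* for all x. -/
/-!
Both generators are Hamiltonian with respect to `j`: `q j + j qᴴ = 0` for `q = q₁` and for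
`q = q₀(x)` (the latter because `u(x)` is self-adjoint). Differentiating the defect
`A S - S Aᴴ - Π j Πᴴ` and substituting the two differential equations, every term that does not
cancel outright carries a factor `q j + j qᴴ`, so the defect has zero derivative. Being zero
at `0`, it vanishes identically.
-/

open Matrix

namespace Matrix

variable {𝕜 R : Type*} {l m n : Type*}

/-- Matrices carry no canonical norm, so derivatives of matrix-valued maps are taken entrywise. -/
def HasEntrywiseDerivAt [NontriviallyNormedField 𝕜] [NormedAddCommGroup R] [NormedSpace 𝕜 R]
    (F : 𝕜 → Matrix m n R) (F' : Matrix m n R) (x : 𝕜) : Prop :=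
  ∀ i k, HasDerivAt (fun y => F y i k) (F' i k) x

section Calculus

variable [NontriviallyNormedField 𝕜] [NormedRing R] [NormedAlgebra 𝕜 R] {x : 𝕜}

theorem hasEntrywiseDerivAt_const (A : Matrix m n R) (x : 𝕜) :
    HasEntrywiseDerivAt (fun _ => A) 0 x :=
  fun i k => hasDerivAt_const x (A i k)

namespace HasEntrywiseDerivAt

theorem sub {F G : 𝕜 → Matrix m n R} {F' G' : Matrix m n R}
    (hF : HasEntrywiseDerivAt F F' x) (hG : HasEntrywiseDerivAt G G' x) :
    HasEntrywiseDerivAt (fun y => F y - G y) (F' - G') x :=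
  fun i k => (hF i k).fun_sub (hG i k)

variable [Fintype m] {F : 𝕜 → Matrix l m R} {F' : Matrix l m R} {G : 𝕜 → Matrix m n R}
  {G' : Matrix m n R}

theorem mul (hF : HasEntrywiseDerivAt F F' x) (hG : HasEntrywiseDerivAt G G' x) :
    HasEntrywiseDerivAt (fun y => F y * G y) (F' * G x + F x * G') x := by
  intro i k
  simp only [mul_apply, add_apply, ← Finset.sum_add_distrib]
  exact HasDerivAt.fun_sum fun b _ => (hF i b).fun_mul (hG b k)

theorem const_mul (A : Matrix l m R) (hG : HasEntrywiseDerivAt G G' x) :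
    HasEntrywiseDerivAt (fun y => A * G y) (A * G') x := by
  simpa using (hasEntrywiseDerivAt_const A x).mul hG

theorem mul_const (hF : HasEntrywiseDerivAt F F' x) (B : Matrix m n R) :
    HasEntrywiseDerivAt (fun y => F y * B) (F' * B) x := by
  simpa using hF.mul (hasEntrywiseDerivAt_const B x)

end HasEntrywiseDerivAt

end Calculus

theorem HasEntrywiseDerivAt.conjTranspose [NontriviallyNormedField 𝕜] [StarRing 𝕜]
    [TrivialStar 𝕜] [NormedAddCommGroup R] [NormedSpace 𝕜 R] [StarAddMonoid R] [StarModule 𝕜 R]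
    [ContinuousStar R] {F : 𝕜 → Matrix m n R} {F' : Matrix m n R} {x : 𝕜}
    (hF : HasEntrywiseDerivAt F F' x) :
    HasEntrywiseDerivAt (fun y => (F y)ᴴ) F'ᴴ x :=
  fun i k => (hF k i).star

theorem is_const_of_hasEntrywiseDerivAt_zero [RCLike 𝕜] [NormedAddCommGroup R] [NormedSpace 𝕜 R]
    {F : 𝕜 → Matrix m n R} (hF : ∀ x, HasEntrywiseDerivAt F 0 x) (x y : 𝕜) : F x = F y :=
  ext fun i k => is_const_of_deriv_eq_zero (fun z => (hF z i k).differentiableAt)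
    (fun z => (hF z i k).deriv) x y

theorem fromBlocks_mul_add_mul_conjTranspose_eq_zero {R : Type*} [Ring R] [StarRing R]
    [Fintype n] [DecidableEq n] (a b c : Matrix n n R) (hb : bᴴ = b) (hc : cᴴ = c) :
    fromBlocks a b c (-aᴴ) * fromBlocks 0 1 (-1) 0
      + fromBlocks 0 1 (-1) 0 * (fromBlocks a b c (-aᴴ))ᴴ = 0 := by
  simp [fromBlocks_multiply, fromBlocks_conjTranspose, fromBlocks_add, hb, hc]

/-- With `S' = P q₁ j Pᴴ` and `P' = A P q₁ + P q₀`, this says `(A S - S Aᴴ)' = (P j Pᴴ)'`. -/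
theorem mul_sub_mul_conjTranspose_eq_of_hamiltonian {R : Type*} [Ring R] [StarRing R] {k : Type*}
    [Fintype m] [Fintype k] (A : Matrix m m R) (P : Matrix m k R) (q₁ q₀ j : Matrix k k R)
    (h₁ : q₁ * j + j * q₁ᴴ = 0) (h₀ : q₀ * j + j * q₀ᴴ = 0) :
    A * (P * q₁ * j * Pᴴ) - P * q₁ * j * Pᴴ * Aᴴ
      = (A * P * q₁ + P * q₀) * j * Pᴴ + P * j * (A * P * q₁ + P * q₀)ᴴ := by
  have h : (A * P * q₁ + P * q₀) * j * Pᴴ + P * j * (A * P * q₁ + P * q₀)ᴴ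
      - (A * (P * q₁ * j * Pᴴ) - P * q₁ * j * Pᴴ * Aᴴ)
      = P * (q₁ * j + j * q₁ᴴ) * Pᴴ * Aᴴ + P * (q₀ * j + j * q₀ᴴ) * Pᴴ := by
    simp only [conjTranspose_add, conjTranspose_mul, Matrix.add_mul, Matrix.mul_add,
      Matrix.mul_assoc]
    abel
  rw [h₁, h₀] at h
  simpa only [Matrix.mul_zero, Matrix.zero_mul, add_zero, sub_eq_zero, eq_comm] using h

end Matrix

theorem displacement_eq_of_hasEntrywiseDerivAt {R : Type*} [NormedRing R] [NormedAlgebra ℝ R]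
    [StarRing R] [StarModule ℝ R] [ContinuousStar R] {m k : Type*} [Fintype m] [Fintype k]
    (A : Matrix m m R) (q₁ j : Matrix k k R) (q₀ : ℝ → Matrix k k R)
    (h₁ : q₁ * j + j * q₁ᴴ = 0) (h₀ : ∀ x, q₀ x * j + j * (q₀ x)ᴴ = 0)
    (P : ℝ → Matrix m k R) (S : ℝ → Matrix m m R)
    (hP : ∀ x, HasEntrywiseDerivAt P (A * P x * q₁ + P x * q₀ x) x)
    (hS : ∀ x, HasEntrywiseDerivAt S (P x * q₁ * j * (P x)ᴴ) x)
    (h0 : A * S 0 - S 0 * Aᴴ = P 0 * j * (P 0)ᴴ) (x : ℝ) :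
    A * S x - S x * Aᴴ = P x * j * (P x)ᴴ := by
  have hD : ∀ y, HasEntrywiseDerivAt (fun y => A * S y - S y * Aᴴ - P y * j * (P y)ᴴ) 0 y := by
    intro y
    have := (((hS y).const_mul A).sub ((hS y).mul_const Aᴴ)).sub
      (((hP y).mul_const j).mul (hP y).conjTranspose)
    rwa [mul_sub_mul_conjTranspose_eq_of_hamiltonian A (P y) q₁ (q₀ y) j h₁ (h₀ y), sub_self] at this
  rw [← sub_eq_zero, is_const_of_hasEntrywiseDerivAt_zero hD x 0, sub_eq_zero, h0]

theorem stmt_3_general (n h : ℕ)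
    (A : Matrix (Fin n) (Fin n) ℂ)
    (u : ℝ → Matrix (Fin h) (Fin h) ℂ) (hu : ∀ x, (u x)ᴴ = u x)
    (q1 j : Matrix (Fin h ⊕ Fin h) (Fin h ⊕ Fin h) ℂ)
    (q0 : ℝ → Matrix (Fin h ⊕ Fin h) (Fin h ⊕ Fin h) ℂ)
    (hq1 : q1 = Matrix.fromBlocks 0 0 1 0)
    (hq0 : ∀ x, q0 x = -(Matrix.fromBlocks 0 1 (u x) 0))
    (hj : j = Matrix.fromBlocks 0 1 (-1) 0)
    (Pi : ℝ → Matrix (Fin n) (Fin h ⊕ Fin h) ℂ)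
    (S : ℝ → Matrix (Fin n) (Fin n) ℂ)
    (hPi : ∀ x i p, HasDerivAt (fun y => Pi y i p)
      ((A * Pi x * q1 + Pi x * q0 x) i p) x)
    (hS : ∀ x i p, HasDerivAt (fun y => S y i p)
      ((Pi x * q1 * j * (Pi x)ᴴ) i p) x)
    (hid0 : A * S 0 - S 0 * Aᴴ = Pi 0 * j * (Pi 0)ᴴ) :
    ∀ x, A * S x - S x * Aᴴ = Pi x * j * (Pi x)ᴴ := by
  have h₁ : q1 * j + j * q1ᴴ = 0 := by
    rw [hq1, hj]
    simpa only [conjTranspose_zero, neg_zero] using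
      fromBlocks_mul_add_mul_conjTranspose_eq_zero (0 : Matrix (Fin h) (Fin h) ℂ) 0 1
        conjTranspose_zero conjTranspose_one
  have h₀ (x : ℝ) : q0 x * j + j * (q0 x)ᴴ = 0 := by
    rw [hq0 x, fromBlocks_neg, neg_zero, hj]
    simpa only [conjTranspose_zero, neg_zero] using
      fromBlocks_mul_add_mul_conjTranspose_eq_zero 0 (-1) (-u x)
        (by rw [conjTranspose_neg, conjTranspose_one]) (by rw [conjTranspose_neg, hu])
  exact displacement_eq_of_hasEntrywiseDerivAt A q1 j q0 h₁ h₀ Pi S hPi hS hid0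

/-- if `Π' = AΠq₁ + Πq₀`, `S' = Πq₁jΠ*` and the matrix identity
`A S(0) - S(0) A* = Π(0) j Π(0)*` holds at `x = 0`, then
`A S(x) - S(x) A* = Π(x) j Π(x)*` for all `x`. -/
theorem stmt_3 (n h : ℕ)
    (A : Matrix (Fin n) (Fin n) ℂ)
    (u : ℝ → Matrix (Fin h) (Fin h) ℂ) (hu : ∀ x, (u x)ᴴ = u x)
    (hucont : ∀ i j, Continuous fun x => u x i j)
    (q1 j : Matrix (Fin h ⊕ Fin h) (Fin h ⊕ Fin h) ℂ)
    (q0 : ℝ → Matrix (Fin h ⊕ Fin h) (Fin h ⊕ Fin h) ℂ)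
    (hq1 : q1 = Matrix.fromBlocks 0 0 1 0)
    (hq0 : ∀ x, q0 x = -(Matrix.fromBlocks 0 1 (u x) 0))
    (hj : j = Matrix.fromBlocks 0 1 (-1) 0)
    (Pi : ℝ → Matrix (Fin n) (Fin h ⊕ Fin h) ℂ)
    (S : ℝ → Matrix (Fin n) (Fin n) ℂ)
    (hPi : ∀ x i p, HasDerivAt (fun y => Pi y i p)
      ((A * Pi x * q1 + Pi x * q0 x) i p) x)
    (hS : ∀ x i p, HasDerivAt (fun y => S y i p)
      ((Pi x * q1 * j * (Pi x)ᴴ) i p) x)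
    (hid0 : A * S 0 - S 0 * Aᴴ = Pi 0 * j * (Pi 0)ᴴ) :
    ∀ x, A * S x - S x * Aᴴ = Pi x * j * (Pi x)ᴴ :=
  stmt_3_general n h A u hu q1 j q0 hq1 hq0 hj Pi S hPi hS hid0
end

section
/- Under the hypotheses of the previous statement with S(0) > 0 and S(ℓ) > 0 for all ℓ ≥ 0, one has ∫₀^ℓ Z₂(x)* Z₂(x) dx ≤ S(0)⁻¹ for every ℓ > 0; in particular each column of Z₂ is square integrable on [0,∞). -/
open Matrix MeasureTheory Set
open scoped ComplexOrder

/-! `Z₂* Z₂ = S⁻¹ Π diag(0, I) Π* S⁻¹ = -(S⁻¹)'`, so by the fundamental theorem of calculus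
`∫₀^ℓ Z₂* Z₂ = S(0)⁻¹ - S(ℓ)⁻¹`, which is `≤ S(0)⁻¹` because `S(ℓ)⁻¹ > 0`. Reading off a diagonal
entry, the nonnegative function `x ↦ ‖Z₂(x) e_p‖²` has integrals over `[0, ℓ]` bounded by
`S(0)⁻¹ p p` uniformly in `ℓ`, hence is integrable on `[0, ∞)`. -/

section Calculus

variable {𝕜 : Type*} [NontriviallyNormedField 𝕜] {m n : Type*} [Fintype n]

theorem hasDerivAt_matrix {E : Type*} [NormedAddCommGroup E] [NormedSpace 𝕜 E] [Fintype m]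
    {A : 𝕜 → Matrix m n E} {A' : Matrix m n E} {x : 𝕜} :
    HasDerivAt A A' x ↔ ∀ i j, HasDerivAt (fun y => A y i j) (A' i j) x :=
  ⟨fun h i j => hasDerivAt_pi.1 (hasDerivAt_pi.1 h i) j,
    fun h => hasDerivAt_pi.2 fun i => hasDerivAt_pi.2 (h i)⟩

theorem Matrix.of_intervalIntegral_eq_sub_of_hasDerivAt [Fintype m] {E : Type*}
    [NormedAddCommGroup E] [NormedSpace ℝ E] [CompleteSpace E] {F G : ℝ → Matrix m n E} {a b : ℝ}
    (hF : ∀ x ∈ uIcc a b, HasDerivAt F (G x) x) (hG : ContinuousOn G (uIcc a b)) :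
    Matrix.of (fun i j => ∫ x in a..b, G x i j) = F b - F a := by
  ext i j
  exact intervalIntegral.integral_eq_sub_of_hasDerivAt
    (fun x hx => hasDerivAt_matrix.1 (hF x hx) i j)
    ((continuous_id.matrix_elem i j).comp_continuousOn hG).intervalIntegrable

open scoped Matrix.Norms.Operator

variable [DecidableEq n] {R : Type*} [NormedCommRing R] [CompleteSpace R]

theorem HasDerivAt.matrix_inv [NormedAlgebra 𝕜 R] {A : 𝕜 → Matrix n n R} {A' : Matrix n n R}
    {x : 𝕜} (hA : HasDerivAt A A' x) (hx : IsUnit (A x)) :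
    HasDerivAt (fun y => (A y)⁻¹) (-((A x)⁻¹ * A' * (A x)⁻¹)) x := by
  -- the operator norm induces the product uniformity only up to a non-reducible defeq
  have : HasSummableGeomSeries (Matrix n n R) :=
    @instHasSummableGeomSeriesOfCompleteSpace _ _ (instCompleteSpace n n R)
  obtain ⟨u, hu⟩ := hx
  have h := (hasFDerivAt_ringInverse (𝕜 := 𝕜) u).comp_hasDerivAt_of_eq x hA hu
  simp only [nonsing_inv_eq_ringInverse, ← hu]
  exact h.congr_deriv (by simp)

variable [NormedAlgebra ℝ R] {S S' : ℝ → Matrix n n R}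

theorem Matrix.continuousOn_inv_mul_mul_inv {s : Set ℝ} (hS : ∀ x ∈ s, HasDerivAt S (S' x) x)
    (hunit : ∀ x ∈ s, IsUnit (S x)) (hS' : ContinuousOn S' s) :
    ContinuousOn (fun x => (S x)⁻¹ * S' x * (S x)⁻¹) s := by
  have hinv : ContinuousOn (fun x => (S x)⁻¹) s := fun x hx =>
    ((hS x hx).matrix_inv (hunit x hx)).continuousAt.continuousWithinAt
  exact (hinv.mul hS').mul hinv

theorem Matrix.of_intervalIntegral_inv_mul_mul_inv {a b : ℝ}
    (hS : ∀ x ∈ uIcc a b, HasDerivAt S (S' x) x) (hunit : ∀ x ∈ uIcc a b, IsUnit (S x))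
    (hS' : ContinuousOn S' (uIcc a b)) :
    Matrix.of (fun i j => ∫ x in a..b, ((S x)⁻¹ * S' x * (S x)⁻¹) i j) = (S a)⁻¹ - (S b)⁻¹ := by
  rw [of_intervalIntegral_eq_sub_of_hasDerivAt (F := fun x => -(S x)⁻¹)
    (fun x hx => by
      have := ((hS x hx).matrix_inv (hunit x hx)).neg
      rwa [neg_neg] at this)
    (continuousOn_inv_mul_mul_inv hS hunit hS')]
  abel

end Calculus

theorem Matrix.conjTranspose_toRows₂_mul_toRows₂ {m₁ m₂ n α : Type*} [Fintype m₁] [Fintype m₂]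
    [DecidableEq m₂] [Semiring α] [StarRing α] (A : Matrix (m₁ ⊕ m₂) n α) :
    A.toRows₂ᴴ * A.toRows₂ = Aᴴ * (fromBlocks 0 0 0 1 : Matrix (m₁ ⊕ m₂) (m₁ ⊕ m₂) α) * A := by
  ext i j
  simp [mul_apply, Fintype.sum_sum_type, fromBlocks, one_apply]

theorem Matrix.re_conjTranspose_mul_self_apply_self {m n 𝕜 : Type*} [Fintype m] [RCLike 𝕜]
    (A : Matrix m n 𝕜) (j : n) : RCLike.re ((Aᴴ * A) j j) = ∑ i, ‖A i j‖ ^ 2 := by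
  simp [mul_apply, RCLike.conj_mul]

theorem integrableOn_Ici_of_intervalIntegral_le {f : ℝ → ℝ} {a C : ℝ} (hf0 : ∀ x, 0 ≤ f x)
    (hf : ContinuousOn f (Ici a)) (hC : ∀ b > a, ∫ x in a..b, f x ≤ C) :
    IntegrableOn f (Ici a) := by
  rw [integrableOn_Ici_iff_integrableOn_Ioi]
  refine integrableOn_Ioi_of_intervalIntegral_norm_bounded C a (b := fun k : ℕ => a + (k + 1))
    (fun k => (hf.mono Icc_subset_Ici_self).integrableOn_Icc.mono_set Ioc_subset_Icc_self)
    (Filter.tendsto_atTop_add_const_left _ a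
      (Filter.tendsto_atTop_add_const_right _ 1 tendsto_natCast_atTop_atTop))
    (Filter.Eventually.of_forall fun k => ?_)
  simp_rw [Real.norm_of_nonneg (hf0 _)]
  exact hC _ (by linarith [k.cast_nonneg (α := ℝ)])

theorem integrableOn_Ici_sum_norm_sq_of_posSemidef {m n 𝕜 : Type*} [Fintype m] [RCLike 𝕜]
    {Z : ℝ → Matrix m n 𝕜} {B : Matrix n n 𝕜} {a : ℝ}
    (hZ : ContinuousOn (fun x => (Z x)ᴴ * Z x) (Ici a))
    (hB : ∀ b > a, (B - of fun i j => ∫ x in a..b, ((Z x)ᴴ * Z x) i j).PosSemidef) (p : n) :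
    IntegrableOn (fun x => ∑ i, ‖Z x i p‖ ^ 2) (Ici a) := by
  have hpp : ContinuousOn (fun x => ((Z x)ᴴ * Z x) p p) (Ici a) :=
    (continuous_id.matrix_elem p p).comp_continuousOn hZ
  simp_rw [← re_conjTranspose_mul_self_apply_self]
  refine integrableOn_Ici_of_intervalIntegral_le (C := RCLike.re (B p p)) (fun x => ?_)
    (RCLike.continuous_re.comp_continuousOn hpp) fun b hb => ?_
  · rw [re_conjTranspose_mul_self_apply_self]
    positivity
  · have hint := (hpp.mono ((uIcc_of_le hb.le).trans_subset Icc_subset_Ici_self)).intervalIntegrable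
      (μ := volume)
    have hdiag := (RCLike.nonneg_iff.1 ((hB b hb).diag_nonneg (i := p))).1
    rw [intervalIntegral.intervalIntegral_re hint]
    simpa using hdiag

/-- with `S(x) > 0` for all `x ≥ 0`, one has
`∫₀^ℓ Z₂* Z₂ dx ≤ S(0)⁻¹` for every `ℓ > 0`; in particular each column of
`Z₂` is square integrable on `[0,∞)`. -/
theorem stmt_10 (n h : ℕ)
    (Pi : ℝ → Matrix (Fin n) (Fin h ⊕ Fin h) ℂ)
    (hPicont : ∀ i p, Continuous fun x => Pi x i p)
    (S : ℝ → Matrix (Fin n) (Fin n) ℂ)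
    (hSpos : ∀ x ≥ (0 : ℝ), (S x).PosDef)
    (hS : ∀ x i p, HasDerivAt (fun y => S y i p)
      (((Pi x * (Matrix.fromBlocks 0 0 0 1 : Matrix (Fin h ⊕ Fin h) (Fin h ⊕ Fin h) ℂ) * (Pi x)ᴴ : Matrix (Fin n) (Fin n) ℂ)) i p) x)
    (Z2 : ℝ → Matrix (Fin h) (Fin n) ℂ)
    (hZ2 : ∀ x i p, Z2 x i p = ((Pi x)ᴴ * (S x)⁻¹) (Sum.inr i) p) :
    (∀ ℓ > (0 : ℝ),
      ((S 0)⁻¹ - Matrix.of fun i p => ∫ x in (0 : ℝ)..ℓ, ((Z2 x)ᴴ * Z2 x) i p).PosSemidef) ∧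
    (∀ p : Fin n, IntegrableOn (fun x => ∑ i, ‖Z2 x i p‖ ^ 2) (Set.Ici (0 : ℝ))) := by
  set S' : ℝ → Matrix (Fin n) (Fin n) ℂ := fun x =>
    Pi x * (fromBlocks 0 0 0 1 : Matrix (Fin h ⊕ Fin h) (Fin h ⊕ Fin h) ℂ) * (Pi x)ᴴ
  have hSder : ∀ x, HasDerivAt S (S' x) x := fun x => hasDerivAt_matrix.2 (hS x)
  have hS'cont : Continuous S' := by
    have hPi : Continuous Pi := continuous_matrix hPicont
    exact (hPi.matrix_mul continuous_const).matrix_mul hPi.matrix_conjTranspose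
  have hunit : ∀ x ∈ Ici (0 : ℝ), IsUnit (S x) := fun x hx => (hSpos x hx).isUnit
  have hZZ : ∀ x ≥ (0 : ℝ), (Z2 x)ᴴ * Z2 x = (S x)⁻¹ * S' x * (S x)⁻¹ := by
    intro x hx
    rw [show Z2 x = ((Pi x)ᴴ * (S x)⁻¹).toRows₂ from Matrix.ext (hZ2 x),
      conjTranspose_toRows₂_mul_toRows₂, conjTranspose_mul, conjTranspose_conjTranspose,
      (hSpos x hx).inv.1.eq]
    simp only [S', Matrix.mul_assoc]
  have hcont : ContinuousOn (fun x => (Z2 x)ᴴ * Z2 x) (Ici 0) :=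
    (continuousOn_inv_mul_mul_inv (fun x _ => hSder x) hunit hS'cont.continuousOn).congr hZZ
  have hFTC : ∀ ℓ > (0 : ℝ),
      (S 0)⁻¹ - Matrix.of (fun i p => ∫ x in (0 : ℝ)..ℓ, ((Z2 x)ᴴ * Z2 x) i p) = (S ℓ)⁻¹ := by
    intro ℓ hℓ
    have hsub : uIcc 0 ℓ ⊆ Ici 0 := (uIcc_of_le hℓ.le).trans_subset Icc_subset_Ici_self
    have hint : ∀ i p, ∫ x in (0 : ℝ)..ℓ, ((Z2 x)ᴴ * Z2 x) i p
        = ∫ x in (0 : ℝ)..ℓ, ((S x)⁻¹ * S' x * (S x)⁻¹) i p := fun i p =>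
      intervalIntegral.integral_congr fun x hx => by rw [hZZ x (hsub hx)]
    simp_rw [hint, of_intervalIntegral_inv_mul_mul_inv (fun x _ => hSder x)
      (fun x hx => hunit x (hsub hx)) hS'cont.continuousOn, sub_sub_cancel]
  have hbound := fun ℓ hℓ => hFTC ℓ hℓ ▸ (hSpos ℓ hℓ.le).inv.posSemidef
  exact ⟨hbound, integrableOn_Ici_sum_norm_sq_of_posSemidef hcont hbound⟩
end

section
/- Suppose the n×n matrix A, the positive definite n×n matrix S₀, and the n×2h matrix Π₀ satisfy A S₀ - S₀ A* = i Π₀ j Π₀* with j = [[0,I_h],[I_h,0]]. Define recursively Π_k = Π_{k-1} ξ(k)⁻¹ - i A Π_{k-1} P and S_k = S_{k-1} + Π_{k-1} ζ(k) Π_{k-1}*, where ξ(k) is j-unitary, ζ(k) = P ξ(k) j, and P = diag(0, I_h). Then A S_k - S_k A* = i Π_k j Π_k* for all k ≥ 0. -/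
open Matrix
open scoped ComplexOrder

lemma key_alg {n m : Type*} [Fintype n] [Fintype m] [DecidableEq m]
    (A Sk : Matrix n n ℂ) (X : Matrix n m ℂ) (xin j P z : Matrix m m ℂ)
    (hPH : Pᴴ = P)
    (h1 : xin * j * xinᴴ = j) (h2 : xin * j * P = z) (h3 : P * j * xinᴴ = z)
    (h4 : P * j * P = 0)
    (hIH : A * Sk - Sk * Aᴴ = Complex.I • (X * j * Xᴴ)) :
    A * (Sk + X * z * Xᴴ) - (Sk + X * z * Xᴴ) * Aᴴ =
      Complex.I • ((X * xin - Complex.I • (A * X * P)) * j *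
        (X * xin - Complex.I • (A * X * P))ᴴ) := by
  have e1 : X * xin * j * (xinᴴ * Xᴴ) = X * j * Xᴴ := by
    calc X * xin * j * (xinᴴ * Xᴴ) = X * (xin * j * xinᴴ) * Xᴴ := by
          simp only [Matrix.mul_assoc]
      _ = X * j * Xᴴ := by rw [h1]; try simp only [Matrix.mul_assoc]
  have e2 : X * xin * j * (P * Xᴴ * Aᴴ) = X * z * Xᴴ * Aᴴ := by
    calc X * xin * j * (P * Xᴴ * Aᴴ) = X * (xin * j * P) * (Xᴴ * Aᴴ) := by
          simp only [Matrix.mul_assoc]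
      _ = _ := by rw [h2]; try simp only [Matrix.mul_assoc]
  have e3 : A * X * P * j * (xinᴴ * Xᴴ) = A * (X * z * Xᴴ) := by
    calc A * X * P * j * (xinᴴ * Xᴴ) = A * X * (P * j * xinᴴ) * Xᴴ := by
          simp only [Matrix.mul_assoc]
      _ = _ := by rw [h3]; try simp only [Matrix.mul_assoc]
  have e4 : A * X * P * j * (P * Xᴴ * Aᴴ) = 0 := by
    calc A * X * P * j * (P * Xᴴ * Aᴴ) = A * X * (P * j * P) * (Xᴴ * Aᴴ) := by
          simp only [Matrix.mul_assoc]
      _ = 0 := by rw [h4]; simp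
  have hct : (X * xin - Complex.I • (A * X * P))ᴴ
      = xinᴴ * Xᴴ + Complex.I • (P * Xᴴ * Aᴴ) := by
    simp [conjTranspose_sub, conjTranspose_smul, conjTranspose_mul, hPH,
      Complex.conj_I, Matrix.mul_assoc, sub_neg_eq_add]
  rw [hct]
  simp only [Matrix.mul_add, Matrix.add_mul, Matrix.sub_mul, Matrix.mul_sub,
    Matrix.mul_smul, Matrix.smul_mul, smul_sub, smul_add, smul_smul,
    Complex.I_mul_I, e1, e2, e3, e4, neg_smul, one_smul, smul_zero]
  rw [← hIH]
  abel

/-- with `A S₀ - S₀ A* = i Π₀ j Π₀*` and the GBDT recursions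
`Π_k = Π_{k-1} ξ(k)⁻¹ - i A Π_{k-1} P`, `S_k = S_{k-1} + Π_{k-1} ζ(k) Π_{k-1}*`,
one has `A S_k - S_k A* = i Π_k j Π_k*` for all `k ≥ 0`. -/
theorem stmt_16 (n h : ℕ)
    (A : Matrix (Fin n) (Fin n) ℂ)
    (C Q : ℕ → Matrix (Fin h) (Fin h) ℂ)
    (hC : ∀ k, (C k).PosDef) (hCQ : ∀ k, C k * (Q k)ᴴ = Q k * C k)
    (j P : Matrix (Fin h ⊕ Fin h) (Fin h ⊕ Fin h) ℂ)
    (hj : j = Matrix.fromBlocks 0 1 1 0)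
    (hP : P = Matrix.fromBlocks 0 0 0 1)
    (xi zeta : ℕ → Matrix (Fin h ⊕ Fin h) (Fin h ⊕ Fin h) ℂ)
    (hxi : ∀ k, xi k = Matrix.fromBlocks (-(Complex.I • Q k)) (C k) (C k)⁻¹ 0)
    (hzeta : ∀ k, zeta k = Matrix.fromBlocks 0 0 0 (C k)⁻¹)
    (Pi : ℕ → Matrix (Fin n) (Fin h ⊕ Fin h) ℂ)
    (S : ℕ → Matrix (Fin n) (Fin n) ℂ)
    (hS0pos : (S 0).PosDef)
    (hid0 : A * S 0 - S 0 * Aᴴ = Complex.I • (Pi 0 * j * (Pi 0)ᴴ))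
    (hPirec : ∀ k, Pi (k + 1) = Pi k * (xi (k + 1))⁻¹ - Complex.I • (A * Pi k * P))
    (hSrec : ∀ k, S (k + 1) = S k + Pi k * zeta (k + 1) * (Pi k)ᴴ) :
    ∀ k, A * S k - S k * Aᴴ = Complex.I • (Pi k * j * (Pi k)ᴴ) := by
  have hCH : ∀ k, (C k)ᴴ = C k := fun k => (hC k).isHermitian
  have hCiH : ∀ k, ((C k)⁻¹)ᴴ = (C k)⁻¹ := fun k => (hC k).isHermitian.inv
  have hCu : ∀ k, IsUnit (C k).det := fun k =>
    (Matrix.isUnit_iff_isUnit_det _).1 (hC k).isUnit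
  have hCCi : ∀ k, C k * (C k)⁻¹ = 1 := fun k => Matrix.mul_nonsing_inv _ (hCu k)
  have hCiC : ∀ k, (C k)⁻¹ * C k = 1 := fun k => Matrix.nonsing_inv_mul _ (hCu k)
  -- conjugate transpose of xi
  have hxiH : ∀ k, (xi k)ᴴ =
      Matrix.fromBlocks (Complex.I • (Q k)ᴴ) (C k)⁻¹ (C k) 0 := by
    intro k
    rw [hxi k, Matrix.fromBlocks_conjTranspose]
    congr 1 <;> simp [hCH, hCiH, Complex.conj_I]
  -- xi * (j * xiᴴ * j) = 1
  have hright : ∀ k, xi k * (j * (xi k)ᴴ * j) = 1 := by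
    intro k
    rw [hxiH k, hxi k, hj]
    rw [Matrix.fromBlocks_multiply, Matrix.fromBlocks_multiply,
      Matrix.fromBlocks_multiply]
    simp only [Matrix.mul_zero, Matrix.zero_mul, Matrix.mul_one, Matrix.one_mul,
      zero_add, add_zero, Matrix.neg_mul, Matrix.smul_mul, Matrix.mul_smul,
      smul_zero]
    rw [hCQ k, hCCi k, hCiC k, ← Matrix.fromBlocks_one, Matrix.fromBlocks_inj]
    exact ⟨rfl, by simp, rfl, rfl⟩
  have hxinv : ∀ k, (xi k)⁻¹ = j * (xi k)ᴴ * j := fun k =>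
    Matrix.inv_eq_right_inv (hright k)
  have hxu : ∀ k, IsUnit (xi k).det := by
    intro k
    have := hright k
    exact Matrix.isUnit_det_of_right_inverse this
  have hleft : ∀ k, j * (xi k)ᴴ * j * xi k = 1 := by
    intro k
    rw [← hxinv k]; exact Matrix.nonsing_inv_mul _ (hxu k)
  have hjj : j * j = 1 := by
    rw [hj, Matrix.fromBlocks_multiply, ← Matrix.fromBlocks_one]
    congr 1 <;> simp
  -- ξᴴ j ξ = j
  have hxjx : ∀ k, (xi k)ᴴ * j * xi k = j := by
    intro k
    have := hleft k
    have h2 : j * (j * (xi k)ᴴ * j * xi k) * j = j * 1 * j := by rw [this]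
    calc (xi k)ᴴ * j * xi k
        = (j * j) * (xi k)ᴴ * j * xi k * (j * j) := by rw [hjj]; simp
      _ = j * (j * (xi k)ᴴ * j * xi k) * j * j := by simp only [Matrix.mul_assoc]
      _ = j := by rw [hleft k]; simp [Matrix.mul_assoc, hjj]
  -- ξ⁻¹ j (ξ⁻¹)ᴴ = j
  have hxinvH : ∀ k, ((xi k)⁻¹)ᴴ = j * xi k * j := by
    intro k
    rw [hxinv k]
    simp only [conjTranspose_mul]
    have hjH : jᴴ = j := by rw [hj]; simp [Matrix.fromBlocks_conjTranspose]
    simp [hjH, Matrix.mul_assoc]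
  have h1 : ∀ k, (xi k)⁻¹ * j * ((xi k)⁻¹)ᴴ = j := by
    intro k
    rw [hxinvH k, hxinv k]
    calc j * (xi k)ᴴ * j * j * (j * xi k * j)
        = j * (xi k)ᴴ * ((j * j) * j) * xi k * j := by simp only [Matrix.mul_assoc]
      _ = j * ((xi k)ᴴ * j * xi k) * j := by rw [hjj]; simp only [Matrix.one_mul, Matrix.mul_one, Matrix.mul_assoc]
      _ = j := by rw [hxjx k, hjj, Matrix.one_mul]
  -- ξ⁻¹ j P = ζ
  have h2 : ∀ k, (xi k)⁻¹ * j * P = zeta k := by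
    intro k
    rw [hxinv k, Matrix.mul_assoc (j * (xi k)ᴴ) j j, hjj, Matrix.mul_one]
    rw [hxiH k, hj, hP, hzeta k]
    simp only [Matrix.fromBlocks_multiply]
    rw [Matrix.fromBlocks_inj]
    refine ⟨by simp, by simp, by simp, by simp⟩
  -- P j (ξ⁻¹)ᴴ = ζ
  have h3 : ∀ k, P * j * ((xi k)⁻¹)ᴴ = zeta k := by
    intro k
    rw [hxinvH k, hxi k, hj, hP, hzeta k]
    simp only [Matrix.fromBlocks_multiply]
    rw [Matrix.fromBlocks_inj]
    refine ⟨by simp, by simp, by simp, by simp⟩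
  have h4 : P * j * P = 0 := by
    rw [hP, hj, Matrix.fromBlocks_multiply, Matrix.fromBlocks_multiply]
    simp
  have hPH : Pᴴ = P := by rw [hP]; simp [Matrix.fromBlocks_conjTranspose]
  intro k
  induction k with
  | zero => exact hid0
  | succ k ih =>
    rw [hSrec k, hPirec k]
    exact key_alg A (S k) (Pi k) ((xi (k+1))⁻¹) j P (zeta (k+1)) hPH
      (h1 _) (h2 _) (h3 _) h4 ih
end
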